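/- arXiv:2010.02717 — 6 statements merged into one kernel-verified Lean document; each statement's English description precedes it below -/
import Mathlib

section
/- Let A be a real symmetric positive definite N×N matrix and α ∈ (0,1). Then the Bochner integral (sin(πα)/π) · ∫₀^∞ μ^{−α} (μI + A)^{−1} dμ converges and equals A^{−α}, i.e. the Balakrishnan integral representation of the negative fractional power holds for symmetric positive definite matrices. -/
/-!
Writing `A = ∑ λⱼ Pⱼ` with the orthogonal rank-one projections `Pⱼ = ψⱼψⱼᵀ`, which sum to `1`,
the resolvent is `(μ + A)⁻¹ = ∑ (μ + λⱼ)⁻¹ Pⱼ`, so everything reduces to the scalar integral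
`∫₀^∞ t^{-α} (t + λ)⁻¹ dt = λ^{-α} π / sin (πα)`. After the scaling `t = λ s` and the
substitution `s = x / (1 - x)` this is the beta integral `B(1 - α, α) = Γ(1 - α) Γ(α)`, and
Euler's reflection formula evaluates it.
-/

open MeasureTheory Set Real Matrix

attribute [local instance] Matrix.normedAddCommGroup Matrix.normedSpace

section BetaIntegral

variable {u v : ℝ}

lemma ofReal_betaIntegrand {x : ℝ} (hx : x ∈ Ioo 0 1) :
    (x : ℂ) ^ ((u : ℂ) - 1) * (1 - (x : ℂ)) ^ ((v : ℂ) - 1) =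
      ((x ^ (u - 1) * (1 - x) ^ (v - 1) : ℝ) : ℂ) := by
  have hx1 : (0 : ℝ) ≤ 1 - x := by linarith [hx.2]
  push_cast [Complex.ofReal_cpow hx.1.le, Complex.ofReal_cpow hx1]
  rfl

lemma integrableOn_rpow_mul_one_sub_rpow (hu : 0 < u) (hv : 0 < v) :
    IntegrableOn (fun x : ℝ => x ^ (u - 1) * (1 - x) ^ (v - 1)) (Ioo 0 1) := by
  have hconv := Complex.betaIntegral_convergent (u := u) (v := v) (by simpa) (by simpa)
  rw [intervalIntegrable_iff_integrableOn_Ioc_of_le zero_le_one] at hconv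
  refine (integrableOn_congr_fun (fun x hx => ?_) measurableSet_Ioo).mp
    (hconv.mono_set Ioo_subset_Ioc_self).re
  rw [ofReal_betaIntegrand hx]
  exact Complex.ofReal_re _

lemma integral_rpow_mul_one_sub_rpow (hu : 0 < u) (hv : 0 < v) :
    ∫ x in Ioo (0 : ℝ) 1, x ^ (u - 1) * (1 - x) ^ (v - 1) = ProbabilityTheory.beta u v := by
  rw [ProbabilityTheory.beta_eq_betaIntegralReal u v hu hv, Complex.betaIntegral,
    intervalIntegral.integral_of_le zero_le_one, integral_Ioc_eq_integral_Ioo,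
    setIntegral_congr_fun measurableSet_Ioo fun x hx => ofReal_betaIntegrand hx,
    integral_complex_ofReal, Complex.ofReal_re]

end BetaIntegral

section DivOneSub

lemma hasDerivAt_div_one_sub {x : ℝ} (hx : x ≠ 1) :
    HasDerivAt (fun y : ℝ => y / (1 - y)) ((1 - x) ^ 2)⁻¹ x := by
  have hx' : 1 - x ≠ 0 := sub_ne_zero.mpr (Ne.symm hx)
  refine ((hasDerivAt_id' x).fun_div ((hasDerivAt_id' x).const_sub 1) hx').congr_deriv ?_
  field_simp
  ring

lemma injOn_div_one_sub : InjOn (fun x : ℝ => x / (1 - x)) (Ioo 0 1) := by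
  intro x hx y hy h
  have hx' : 1 - x ≠ 0 := by linarith [hx.2]
  have hy' : 1 - y ≠ 0 := by linarith [hy.2]
  rw [div_eq_div_iff hx' hy'] at h
  linarith

lemma image_div_one_sub_Ioo : (fun x : ℝ => x / (1 - x)) '' Ioo 0 1 = Ioi 0 := by
  ext t
  refine ⟨?_, fun ht => ⟨t / (1 + t), ?_, ?_⟩⟩
  · rintro ⟨x, hx, rfl⟩
    exact div_pos hx.1 (by linarith [hx.2])
  · have ht' : (0 : ℝ) < 1 + t := by linarith [mem_Ioi.mp ht]
    exact ⟨div_pos ht ht', (div_lt_one ht').mpr (by linarith)⟩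
  · have ht' : (1 : ℝ) + t ≠ 0 := by linarith [mem_Ioi.mp ht]
    field_simp
    ring

lemma abs_inv_one_sub_sq (x : ℝ) : |((1 - x) ^ 2)⁻¹| = ((1 - x) ^ 2)⁻¹ :=
  abs_of_nonneg (by positivity)

variable {E : Type*} [NormedAddCommGroup E] [NormedSpace ℝ E]

theorem integrableOn_Ioi_iff_integrableOn_Ioo_div_one_sub (g : ℝ → E) :
    IntegrableOn g (Ioi 0) ↔
      IntegrableOn (fun x => ((1 - x) ^ 2)⁻¹ • g (x / (1 - x))) (Ioo 0 1) := by
  have := integrableOn_image_iff_integrableOn_abs_deriv_smul measurableSet_Ioo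
    (fun x hx => (hasDerivAt_div_one_sub hx.2.ne).hasDerivWithinAt) injOn_div_one_sub g
  simpa only [image_div_one_sub_Ioo, abs_inv_one_sub_sq] using this

theorem integral_Ioi_eq_integral_Ioo_div_one_sub (g : ℝ → E) :
    ∫ t in Ioi 0, g t = ∫ x in Ioo 0 1, ((1 - x) ^ 2)⁻¹ • g (x / (1 - x)) := by
  have := integral_image_eq_integral_abs_deriv_smul measurableSet_Ioo
    (fun x hx => (hasDerivAt_div_one_sub hx.2.ne).hasDerivWithinAt) injOn_div_one_sub g
  simpa only [image_div_one_sub_Ioo, abs_inv_one_sub_sq] using this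

end DivOneSub

section BetaIntegralSecondKind

variable {u v : ℝ}

lemma betaIntegrand_div_one_sub {x : ℝ} (hx : x ∈ Ioo 0 1) :
    ((1 - x) ^ 2)⁻¹ • ((x / (1 - x)) ^ (u - 1) * (1 + x / (1 - x)) ^ (-(u + v))) =
      x ^ (u - 1) * (1 - x) ^ (v - 1) := by
  have hy : 0 < 1 - x := by linarith [hx.2]
  have h1 : 1 + x / (1 - x) = (1 - x)⁻¹ := by field_simp; ring
  have h2 : (1 - x) ^ (u + v) = (1 - x) ^ 2 * (1 - x) ^ (u - 1) * (1 - x) ^ (v - 1) := by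
    rw [← rpow_natCast, ← rpow_add hy, ← rpow_add hy]
    ring_nf
  rw [h1, inv_rpow hy.le, rpow_neg hy.le, inv_inv, div_rpow hx.1.le hy.le, h2, smul_eq_mul]
  have : 0 < (1 - x) ^ (u - 1) := rpow_pos_of_pos hy _
  field_simp

lemma integrableOn_rpow_mul_one_add_rpow (hu : 0 < u) (hv : 0 < v) :
    IntegrableOn (fun t : ℝ => t ^ (u - 1) * (1 + t) ^ (-(u + v))) (Ioi 0) := by
  rw [integrableOn_Ioi_iff_integrableOn_Ioo_div_one_sub,
    integrableOn_congr_fun (fun x hx => betaIntegrand_div_one_sub hx) measurableSet_Ioo]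
  exact integrableOn_rpow_mul_one_sub_rpow hu hv

lemma integral_rpow_mul_one_add_rpow (hu : 0 < u) (hv : 0 < v) :
    ∫ t in Ioi (0 : ℝ), t ^ (u - 1) * (1 + t) ^ (-(u + v)) = ProbabilityTheory.beta u v := by
  rw [integral_Ioi_eq_integral_Ioo_div_one_sub,
    setIntegral_congr_fun measurableSet_Ioo (fun x hx => betaIntegrand_div_one_sub hx),
    integral_rpow_mul_one_sub_rpow hu hv]

lemma rpow_mul_add_rpow_mul_left {l t : ℝ} (hl : 0 < l) (ht : 0 < t) :
    (l * t) ^ (u - 1) * (l * t + l) ^ (-(u + v)) =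
      l ^ (-v - 1) * (t ^ (u - 1) * (1 + t) ^ (-(u + v))) := by
  have h1t : 0 < 1 + t := by linarith
  rw [show l * t + l = l * (1 + t) by ring, mul_rpow hl.le ht.le, mul_rpow hl.le h1t.le,
    show -v - 1 = (u - 1) + -(u + v) by ring, rpow_add hl]
  ring

lemma integrableOn_rpow_mul_add_rpow (hu : 0 < u) (hv : 0 < v) {l : ℝ} (hl : 0 < l) :
    IntegrableOn (fun t : ℝ => t ^ (u - 1) * (t + l) ^ (-(u + v))) (Ioi 0) := by
  have := integrableOn_Ioi_comp_mul_left_iff (fun t : ℝ => t ^ (u - 1) * (t + l) ^ (-(u + v))) 0 hl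
  rw [mul_zero] at this
  rw [← this, integrableOn_congr_fun
    (fun t (ht : t ∈ Ioi 0) => rpow_mul_add_rpow_mul_left (u := u) (v := v) hl ht)
    measurableSet_Ioi]
  exact (integrableOn_rpow_mul_one_add_rpow hu hv).const_mul _

lemma integral_rpow_mul_add_rpow (hu : 0 < u) (hv : 0 < v) {l : ℝ} (hl : 0 < l) :
    ∫ t in Ioi (0 : ℝ), t ^ (u - 1) * (t + l) ^ (-(u + v)) =
      l ^ (-v) * ProbabilityTheory.beta u v := by
  have := integral_comp_mul_left_Ioi (fun t : ℝ => t ^ (u - 1) * (t + l) ^ (-(u + v))) 0 hl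
  rw [mul_zero, setIntegral_congr_fun measurableSet_Ioi
    (fun t ht => rpow_mul_add_rpow_mul_left hl ht), integral_const_mul,
    integral_rpow_mul_one_add_rpow hu hv, eq_inv_smul_iff₀ hl.ne', smul_eq_mul] at this
  rw [← this, rpow_sub_one hl.ne']
  field_simp

end BetaIntegralSecondKind

theorem ProbabilityTheory.beta_one_sub_self (α : ℝ) : ProbabilityTheory.beta (1 - α) α = π / sin (π * α) := by
  rw [ProbabilityTheory.beta, sub_add_cancel, Real.Gamma_one, div_one, mul_comm,
    Real.Gamma_mul_Gamma_one_sub]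

lemma integrableOn_rpow_neg_mul_add_inv {α : ℝ} (hα : α ∈ Ioo 0 1) {l : ℝ} (hl : 0 < l) :
    IntegrableOn (fun t : ℝ => t ^ (-α) * (t + l)⁻¹) (Ioi 0) := by
  simpa only [sub_sub_cancel_left, sub_add_cancel, rpow_neg_one] using
    integrableOn_rpow_mul_add_rpow (sub_pos.mpr hα.2) hα.1 hl

lemma integral_rpow_neg_mul_add_inv {α : ℝ} (hα : α ∈ Ioo 0 1) {l : ℝ} (hl : 0 < l) :
    ∫ t in Ioi (0 : ℝ), t ^ (-α) * (t + l)⁻¹ = l ^ (-α) * (π / sin (π * α)) := by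
  simpa only [sub_sub_cancel_left, sub_add_cancel, rpow_neg_one, ProbabilityTheory.beta_one_sub_self] using
    integral_rpow_mul_add_rpow (sub_pos.mpr hα.2) hα.1 hl

section OrthogonalIdempotents

variable {ι R A : Type*} [Fintype ι] [CommSemiring R] [Semiring A] [Algebra R A]

theorem sum_smul_mul_sum_smul_of_orthogonal_idempotents {P : ι → A}
    (hidem : ∀ i, P i * P i = P i) (horth : Pairwise fun i j => P i * P j = 0) (c d : ι → R) :
    (∑ i, c i • P i) * (∑ i, d i • P i) = ∑ i, (c i * d i) • P i := by
  rw [Finset.sum_mul_sum]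
  refine Finset.sum_congr rfl fun i _ => ?_
  rw [Finset.sum_eq_single i (fun j _ hji => by rw [smul_mul_smul_comm, horth hji.symm, smul_zero])
    (by simp), smul_mul_smul_comm, hidem]

theorem Matrix.inv_sum_smul_of_orthogonal_idempotents {n 𝕜 : Type*} [Fintype n] [DecidableEq n]
    [Field 𝕜] {P : ι → Matrix n n 𝕜} (hidem : ∀ i, P i * P i = P i)
    (horth : Pairwise fun i j => P i * P j = 0) (hsum : ∑ i, P i = 1) {c : ι → 𝕜}
    (hc : ∀ i, c i ≠ 0) : (∑ i, c i • P i)⁻¹ = ∑ i, (c i)⁻¹ • P i := by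
  refine inv_eq_right_inv ?_
  simp only [sum_smul_mul_sum_smul_of_orthogonal_idempotents hidem horth, mul_inv_cancel₀ (hc _),
    one_smul, hsum]

end OrthogonalIdempotents

theorem Matrix.sum_vecMulVec_self_eq_one {n R : Type*} [Fintype n] [DecidableEq n] [CommRing R]
    {ψ : n → n → R} (horth : ∀ i j, ψ i ⬝ᵥ ψ j = if i = j then 1 else 0) :
    ∑ j, vecMulVec (ψ j) (ψ j) = 1 := by
  have hrows : of ψ * (of ψ)ᵀ = 1 := by
    ext i j
    simpa [mul_apply, one_apply, dotProduct] using horth i j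
  rw [← mul_eq_one_comm.mp hrows]
  ext i j
  simp [sum_apply, vecMulVec_apply, mul_apply]

/-- Balakrishnan integral representation of the negative fractional power of a real
symmetric positive definite matrix `A = Σⱼ λⱼ ψⱼψⱼᵀ` (spectral decomposition with
orthonormal eigenvectors `ψⱼ` and eigenvalues `λⱼ > 0`): the Bochner integral
`(sin(πα)/π) ∫₀^∞ μ^{-α} (μI + A)⁻¹ dμ` converges and equals
`A^{-α} = Σⱼ λⱼ^{-α} ψⱼψⱼᵀ`. -/
theorem matrix_balakrishnan (N : ℕ) (A : Matrix (Fin N) (Fin N) ℝ)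
    (ψ : Fin N → (Fin N → ℝ)) (lam : Fin N → ℝ)
    (horth : ∀ i j, dotProduct (ψ i) (ψ j) = if i = j then 1 else 0)
    (hpos : ∀ j, 0 < lam j)
    (hA : A = ∑ j, lam j • Matrix.vecMulVec (ψ j) (ψ j))
    (α : ℝ) (hα : α ∈ Set.Ioo (0:ℝ) 1) :
    @MeasureTheory.IntegrableOn ℝ (Matrix (Fin N) (Fin N) ℝ) _ _ SeminormedAddGroup.toContinuousENorm
      (fun μ : ℝ => μ ^ (-α) • (μ • (1 : Matrix (Fin N) (Fin N) ℝ) + A)⁻¹) (Set.Ioi 0) volume ∧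
    (Real.sin (Real.pi * α) / Real.pi) •
        (∫ μ in Set.Ioi (0:ℝ), μ ^ (-α) • (μ • (1 : Matrix (Fin N) (Fin N) ℝ) + A)⁻¹) =
      ∑ j, lam j ^ (-α) • Matrix.vecMulVec (ψ j) (ψ j) := by
  set P : Fin N → Matrix (Fin N) (Fin N) ℝ := fun j => vecMulVec (ψ j) (ψ j)
  have hprod : ∀ i j, P i * P j = vecMulVec (ψ i) ((ψ i ⬝ᵥ ψ j) • ψ j) := fun i j =>
    vecMulVec_mul_vecMulVec _ _ _ _
  have hidem : ∀ i, P i * P i = P i := fun i => by rw [hprod, horth, if_pos rfl, one_smul]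
  have hperp : Pairwise fun i j => P i * P j = 0 := fun i j hij => by simp [hprod, horth, hij]
  have hsum : ∑ j, P j = 1 := sum_vecMulVec_self_eq_one horth
  have hresolvent : EqOn (fun μ : ℝ => μ ^ (-α) • (μ • (1 : Matrix (Fin N) (Fin N) ℝ) + A)⁻¹)
      (fun μ => ∑ j, (μ ^ (-α) * (μ + lam j)⁻¹) • P j) (Ioi 0) := fun μ hμ => by
    have hshift : μ • 1 + A = ∑ j, (μ + lam j) • P j := by
      simp only [hA, ← hsum, Finset.smul_sum, ← Finset.sum_add_distrib, add_smul, P]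
    dsimp only
    rw [hshift, inv_sum_smul_of_orthogonal_idempotents hidem hperp hsum
      fun j => (add_pos hμ (hpos j)).ne', Finset.smul_sum]
    simp only [smul_smul]
  -- type left to inference: instance search does not find `ContinuousENorm` on these matrices
  have hint := fun j => (integrableOn_rpow_neg_mul_add_inv hα (hpos j)).smul_const (P j)
  refine ⟨IntegrableOn.congr_fun (integrable_finsetSum _ fun j _ => hint j) hresolvent.symm
    measurableSet_Ioi, ?_⟩
  have hsin : sin (π * α) ≠ 0 :=
    (sin_pos_of_pos_of_lt_pi (mul_pos pi_pos hα.1) (mul_lt_of_lt_one_right pi_pos hα.2)).ne'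
  rw [setIntegral_congr_fun measurableSet_Ioi hresolvent,
    integral_finsetSum _ fun j _ => hint j, Finset.smul_sum]
  refine Finset.sum_congr rfl fun j _ => ?_
  rw [integral_smul_const, integral_rpow_neg_mul_add_inv hα (hpos j), smul_smul]
  congr 1
  field_simp
end

section
/- Let A be a real symmetric positive definite N×N matrix such that for every μ ≥ 0 the matrix (μI + A)^{−1} has all entries nonnegative. Then for every α ∈ (0,1) and every vector f ∈ ℝ^N with all entries nonnegative, the vector A^{−α} f has all entries nonnegative. -/
/-! With `C = ∫₀^∞ x^{-α} (x + 1)⁻¹ dx > 0`, the substitution `x ↦ λx` gives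
`λ^{-α} = C⁻¹ ∫₀^∞ x^{-α} (x + λ)⁻¹ dx` for every `λ > 0`. Writing `A = Pᵀ diag(λ) P` with `P`
orthogonal, this turns `A^{-α} f` into `C⁻¹ ∫₀^∞ x^{-α} (xI + A)⁻¹ f dx`, an integral of
entrywise nonnegative vectors. -/

open Set Real Matrix MeasureTheory

section Stieltjes

variable {α : ℝ}

lemma integrableOn_rpow_neg_mul_inv_add (hα : α ∈ Ioo (0 : ℝ) 1) {l : ℝ} (hl : 0 < l) :
    IntegrableOn (fun x : ℝ => x ^ (-α) * (x + l)⁻¹) (Ioi 0) := by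
  have hmeas : AEStronglyMeasurable (fun x : ℝ => x ^ (-α) * (x + l)⁻¹) := by fun_prop
  rw [← Ioc_union_Ioi_eq_Ioi zero_le_one]
  refine IntegrableOn.union ?_ ?_
  · have hdom : IntegrableOn (fun x : ℝ => l⁻¹ * x ^ (-α)) (Ioc 0 1) :=
      ((intervalIntegral.intervalIntegrable_rpow' (by linarith [hα.2])).const_mul _).1
    refine hdom.mono' hmeas.restrict ?_
    filter_upwards [ae_restrict_mem measurableSet_Ioc] with x hx
    have hx0 : 0 < x := hx.1
    rw [norm_of_nonneg (by positivity), mul_comm]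
    gcongr
    linarith
  · have hdom : IntegrableOn (fun x : ℝ => x ^ (-α - 1)) (Ioi 1) :=
      (integrableOn_Ioi_rpow_iff one_pos).2 (by linarith [hα.1])
    refine hdom.mono' hmeas.restrict ?_
    filter_upwards [ae_restrict_mem measurableSet_Ioi] with x (hx : 1 < x)
    rw [norm_of_nonneg (by positivity), rpow_sub_one (by positivity), div_eq_mul_inv]
    gcongr
    linarith

lemma integral_rpow_neg_mul_inv_add (α : ℝ) {l : ℝ} (hl : 0 < l) :
    ∫ x in Ioi (0 : ℝ), x ^ (-α) * (x + l)⁻¹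
      = l ^ (-α) * ∫ x in Ioi (0 : ℝ), x ^ (-α) * (x + 1)⁻¹ := by
  have hscale : ∀ x ∈ Ioi (0 : ℝ),
      (l * x) ^ (-α) * (l * x + l)⁻¹ = l⁻¹ * (l ^ (-α) * (x ^ (-α) * (x + 1)⁻¹)) := by
    intro x hx
    rw [mul_rpow hl.le (le_of_lt hx), show l * x + l = l * (x + 1) by ring, mul_inv]
    ring
  have hsubst := integral_comp_mul_left_Ioi (fun x => x ^ (-α) * (x + l)⁻¹) 0 hl
  rw [mul_zero, setIntegral_congr_fun measurableSet_Ioi hscale, integral_const_mul,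
    integral_const_mul, smul_eq_mul] at hsubst
  exact (mul_left_cancel₀ (inv_ne_zero hl.ne') hsubst).symm

lemma integral_rpow_neg_mul_inv_add_one_pos (hα : α ∈ Ioo (0 : ℝ) 1) :
    0 < ∫ x in Ioi (0 : ℝ), x ^ (-α) * (x + 1)⁻¹ := by
  have hpos : ∀ x ∈ Ioi (0 : ℝ), 0 < x ^ (-α) * (x + 1)⁻¹ := fun x (hx : 0 < x) => by positivity
  rw [setIntegral_pos_iff_support_of_nonneg_ae
      (ae_restrict_of_forall_mem measurableSet_Ioi fun x hx => (hpos x hx).le)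
      (integrableOn_rpow_neg_mul_inv_add hα one_pos),
    inter_eq_right.2 fun x hx => Function.mem_support.2 (hpos x hx).ne', volume_Ioi]
  exact ENNReal.zero_lt_top

theorem sum_rpow_neg_mul_nonneg_of_sum_inv_add_mul_nonneg {ι : Type*} (s : Finset ι)
    {l c : ι → ℝ} (hl : ∀ j ∈ s, 0 < l j) (hα : α ∈ Ioo (0 : ℝ) 1)
    (h : ∀ x > 0, 0 ≤ ∑ j ∈ s, (x + l j)⁻¹ * c j) :
    0 ≤ ∑ j ∈ s, l j ^ (-α) * c j := by
  set C := ∫ x in Ioi (0 : ℝ), x ^ (-α) * (x + 1)⁻¹ with hCdef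
  have hC : 0 < C := integral_rpow_neg_mul_inv_add_one_pos hα
  have hrepr : ∑ j ∈ s, l j ^ (-α) * c j
      = C⁻¹ * ∫ x in Ioi (0 : ℝ), ∑ j ∈ s, x ^ (-α) * (x + l j)⁻¹ * c j := by
    rw [integral_finsetSum s fun j hj =>
      (integrableOn_rpow_neg_mul_inv_add hα (hl j hj)).mul_const (c j), Finset.mul_sum]
    refine Finset.sum_congr rfl fun j hj => ?_
    rw [integral_mul_const, integral_rpow_neg_mul_inv_add α (hl j hj), ← hCdef]
    field_simp
  rw [hrepr]
  refine mul_nonneg (inv_nonneg.2 hC.le)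
    (setIntegral_nonneg measurableSet_Ioi fun x (hx : 0 < x) => ?_)
  simp_rw [mul_assoc, ← Finset.mul_sum]
  exact mul_nonneg (rpow_nonneg hx.le _) (h x hx)

end Stieltjes

section Diagonalization

variable {n R : Type*} [Fintype n] [DecidableEq n]

lemma sum_smul_vecMulVec_self_eq [CommSemiring R] (ψ : n → n → R) (d : n → R) :
    ∑ j, d j • vecMulVec (ψ j) (ψ j) = (of ψ)ᵀ * Matrix.diagonal d * of ψ := by
  ext i k
  rw [mul_apply]
  simp only [Matrix.sum_apply, Matrix.smul_apply, vecMulVec_apply, mul_diagonal,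
    transpose_apply, of_apply, smul_eq_mul]
  exact Finset.sum_congr rfl fun j _ => by ring

lemma transpose_mul_diagonal_mul_mulVec_apply [CommSemiring R] (P : Matrix n n R) (d v : n → R)
    (i : n) : ((Pᵀ * Matrix.diagonal d * P) *ᵥ v) i = ∑ j, d j * (P j i * (P *ᵥ v) j) := by
  rw [← mulVec_mulVec, ← mulVec_mulVec, mulVec, dotProduct]
  simp only [mulVec_diagonal, transpose_apply]
  exact Finset.sum_congr rfl fun j _ => by ring

lemma smul_one_add_transpose_mul_diagonal_mul [CommSemiring R] {P : Matrix n n R}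
    (hP : Pᵀ * P = 1) (μ : R) (d : n → R) :
    μ • 1 + Pᵀ * Matrix.diagonal d * P = Pᵀ * Matrix.diagonal (fun j => μ + d j) * P := by
  have hμ : μ • (1 : Matrix n n R) = Pᵀ * Matrix.diagonal (fun _ => μ) * P := by
    rw [← smul_one_eq_diagonal, Matrix.mul_smul, Matrix.mul_one, Matrix.smul_mul, hP]
  rw [hμ, ← add_mul, ← Matrix.mul_add, diagonal_add]

lemma inv_transpose_mul_diagonal_mul [Field R] {P : Matrix n n R} (hP : P * Pᵀ = 1)
    {d : n → R} (hd : ∀ j, d j ≠ 0) :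
    (Pᵀ * Matrix.diagonal d * P)⁻¹ = Pᵀ * Matrix.diagonal d⁻¹ * P := by
  refine inv_eq_right_inv ?_
  calc Pᵀ * Matrix.diagonal d * P * (Pᵀ * Matrix.diagonal d⁻¹ * P)
      = Pᵀ * (Matrix.diagonal d * Matrix.diagonal d⁻¹) * P := by
        simp only [Matrix.mul_assoc, ← Matrix.mul_assoc P, hP, Matrix.one_mul]
    _ = 1 := by
        rw [diagonal_mul_diagonal]
        simp [hd, mul_eq_one_comm.1 hP]

end Diagonalization

/-- Positivity preservation for the spectral fractional power: if a real symmetric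
positive definite matrix `A = Σⱼ λⱼ ψⱼψⱼᵀ` (spectral decomposition with orthonormal
eigenvectors and positive eigenvalues) is such that `(μI + A)⁻¹` has nonnegative entries
for every `μ ≥ 0`, then for every `α ∈ (0,1)` and every entrywise nonnegative vector `f`,
the vector `A^{-α} f = (Σⱼ λⱼ^{-α} ψⱼψⱼᵀ) f` is entrywise nonnegative. -/
theorem matrix_fractional_power_positivity (N : ℕ) (A : Matrix (Fin N) (Fin N) ℝ)
    (ψ : Fin N → (Fin N → ℝ)) (lam : Fin N → ℝ)
    (horth : ∀ i j, dotProduct (ψ i) (ψ j) = if i = j then 1 else 0)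
    (hpos : ∀ j, 0 < lam j)
    (hA : A = ∑ j, lam j • Matrix.vecMulVec (ψ j) (ψ j))
    (hmono : ∀ μ : ℝ, 0 ≤ μ →
      ∀ i j, 0 ≤ (μ • (1 : Matrix (Fin N) (Fin N) ℝ) + A)⁻¹ i j)
    (α : ℝ) (hα : α ∈ Set.Ioo (0:ℝ) 1)
    (f : Fin N → ℝ) (hf : ∀ i, 0 ≤ f i) :
    ∀ i, 0 ≤ (∑ j, lam j ^ (-α) • Matrix.vecMulVec (ψ j) (ψ j)).mulVec f i := by
  intro i
  set P : Matrix (Fin N) (Fin N) ℝ := of ψ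
  have hPPt : P * Pᵀ = 1 := by ext j k; exact horth j k
  have hPtP : Pᵀ * P = 1 := mul_eq_one_comm.1 hPPt
  rw [sum_smul_vecMulVec_self_eq] at hA ⊢
  rw [transpose_mul_diagonal_mul_mulVec_apply]
  refine sum_rpow_neg_mul_nonneg_of_sum_inv_add_mul_nonneg _ (fun j _ => hpos j) hα
    fun x hx => ?_
  have hresolvent : (x • 1 + A)⁻¹ = Pᵀ * Matrix.diagonal (fun j => (x + lam j)⁻¹) * P := by
    rw [hA, smul_one_add_transpose_mul_diagonal_mul hPtP,
      inv_transpose_mul_diagonal_mul hPPt fun j => (add_pos hx (hpos j)).ne']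
    rfl
  rw [← transpose_mul_diagonal_mul_mulVec_apply, ← hresolvent, mulVec, dotProduct]
  exact Finset.sum_nonneg fun k _ => mul_nonneg (hmono x hx.le i k) (hf k)
end

section
/- For every real number λ > 0, every τ > 0 and every α ∈ (0,1), the improper integral ∫_{−1}^{1} (1−ξ)^{−α} (1+ξ)^{α−2} (τ(1−ξ)/(1+ξ) + λ)^{−1} dξ converges and λ^{−α} = (2 sin(πα)/π) · τ^{1−α} · ∫_{−1}^{1} (1−ξ)^{−α} (1+ξ)^{α−2} (τ(1−ξ)/(1+ξ) + λ)^{−1} dξ. -/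
open MeasureTheory Set Real

lemma beta_integral_aux {α : ℝ} (h0 : 0 < α) (h1 : α < 1) :
    IntegrableOn (fun v : ℝ => v ^ (-α) * (1 - v) ^ (α - 1)) (Ioo (0:ℝ) 1) ∧
    ∫ v in Ioo (0:ℝ) 1, v ^ (-α) * (1 - v) ^ (α - 1) = π / Real.sin (π * α) := by
  set cf : ℝ → ℂ := fun x => (x:ℂ) ^ ((1 - (α:ℂ)) - 1) * (1 - (x:ℂ)) ^ ((α:ℂ) - 1) with hcf
  have hc : IntervalIntegrable cf volume 0 1 :=
    Complex.betaIntegral_convergent (by simp [h1]) (by simp [h0])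
  have heq : ∀ x ∈ Ioo (0:ℝ) 1,
      ((x ^ (-α) * (1 - x) ^ (α - 1) : ℝ) : ℂ) = cf x := by
    intro x hx
    have hx0 : (0:ℝ) ≤ x := hx.1.le
    have hx1 : (0:ℝ) ≤ 1 - x := by linarith [hx.2]
    rw [hcf, Complex.ofReal_mul, Complex.ofReal_cpow hx0, Complex.ofReal_cpow hx1]
    push_cast
    ring_nf
  have hIc : IntegrableOn cf (Ioo 0 1) := by
    rw [intervalIntegrable_iff_integrableOn_Ioc_of_le zero_le_one] at hc
    exact hc.mono_set Ioo_subset_Ioc_self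
  have hae : (fun x : ℝ => ((x ^ (-α) * (1 - x) ^ (α - 1) : ℝ) : ℂ))
      =ᵐ[volume.restrict (Ioo (0:ℝ) 1)] cf := by
    filter_upwards [ae_restrict_mem measurableSet_Ioo] with x hx using heq x hx
  have hI : IntegrableOn (fun v : ℝ => v ^ (-α) * (1 - v) ^ (α - 1)) (Ioo (0:ℝ) 1) := by
    have := (hIc.congr_fun_ae hae.symm).re
    have h2 : Integrable (fun x : ℝ => x ^ (-α) * (1 - x) ^ (α - 1)) (volume.restrict (Ioo 0 1)) := by
      simpa using this
    exact h2
  refine ⟨hI, ?_⟩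
  have hbv : Complex.betaIntegral (1 - (α:ℂ)) (α:ℂ) = (π:ℂ) / Complex.sin ((π:ℂ) * α) := by
    have hb := Complex.Gamma_mul_Gamma_eq_betaIntegral (s := 1 - (α:ℂ)) (t := (α:ℂ))
      (by simp [h1]) (by simp [h0])
    rw [show (1 - (α:ℂ)) + α = 1 by ring, Complex.Gamma_one, one_mul] at hb
    rw [← hb, mul_comm, Complex.Gamma_mul_Gamma_one_sub]
  have hIoo : ∫ x in Ioo (0:ℝ) 1, cf x = (π:ℂ) / Complex.sin ((π:ℂ) * α) := by
    rw [← hbv, Complex.betaIntegral]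
    rw [intervalIntegral.integral_of_le zero_le_one, ← integral_Ioc_eq_integral_Ioo]
  have : ((∫ v in Ioo (0:ℝ) 1, v ^ (-α) * (1 - v) ^ (α - 1) : ℝ) : ℂ)
      = (π:ℂ) / Complex.sin ((π:ℂ) * α) := by
    have hro : ∫ v in Ioo (0:ℝ) 1, ((v ^ (-α) * (1 - v) ^ (α - 1) : ℝ) : ℂ)
        = ((∫ v in Ioo (0:ℝ) 1, v ^ (-α) * (1 - v) ^ (α - 1) : ℝ) : ℂ) := integral_ofReal
    rw [← hro, integral_congr_ae hae, hIoo]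
  have hsin : Complex.sin ((π:ℂ) * α) = ((Real.sin (π * α) : ℝ) : ℂ) := by
    rw [show ((π:ℂ) * α) = ((π * α : ℝ) : ℂ) by push_cast; ring, ← Complex.ofReal_sin]
  rw [hsin] at this
  exact_mod_cast this

/-- Change-of-variable form of the scalar Balakrishnan formula underlying the
Gauss–Jacobi quadrature method: for `λ > 0`, `τ > 0` and `α ∈ (0,1)`, the integral
`∫_{-1}^{1} (1-ξ)^{-α} (1+ξ)^{α-2} (τ(1-ξ)/(1+ξ) + λ)⁻¹ dξ` converges and
`λ^{-α} = (2 sin (π α) / π) τ^{1-α} ∫_{-1}^{1} (1-ξ)^{-α}(1+ξ)^{α-2}(τ(1-ξ)/(1+ξ)+λ)⁻¹ dξ`. -/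
theorem scalar_balakrishnan_gauss_jacobi (lam τ α : ℝ) (hlam : 0 < lam) (hτ : 0 < τ)
    (hα : α ∈ Set.Ioo (0:ℝ) 1) :
    MeasureTheory.IntegrableOn
      (fun ξ : ℝ => (1 - ξ) ^ (-α) * (1 + ξ) ^ (α - 2) * (τ * (1 - ξ) / (1 + ξ) + lam)⁻¹)
      (Set.Ioo (-1) 1) ∧
    lam ^ (-α) =
      (2 * Real.sin (Real.pi * α) / Real.pi) * τ ^ (1 - α) *
        ∫ ξ in Set.Ioo (-1:ℝ) 1,
          (1 - ξ) ^ (-α) * (1 + ξ) ^ (α - 2) * (τ * (1 - ξ) / (1 + ξ) + lam)⁻¹ := by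
  obtain ⟨hα0, hα1⟩ := hα
  set G : ℝ → ℝ :=
    fun ξ : ℝ => (1 - ξ) ^ (-α) * (1 + ξ) ^ (α - 2) * (τ * (1 - ξ) / (1 + ξ) + lam)⁻¹ with hG
  set D : ℝ → ℝ := fun v => τ * (1 - v) + lam * v with hDdef
  set f : ℝ → ℝ := fun v => (τ * (1 - v) - lam * v) / D v with hfdef
  have hD : ∀ v ∈ Ioo (0:ℝ) 1, 0 < D v := by
    intro v hv; simp only [hDdef]; nlinarith [hv.1, hv.2]
  have h1m : ∀ v ∈ Ioo (0:ℝ) 1, 1 - f v = 2 * lam * v / D v := by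
    intro v hv
    have hd := (hD v hv).ne'
    simp only [hfdef]
    field_simp
    simp only [hDdef]; ring
  have h1p : ∀ v ∈ Ioo (0:ℝ) 1, 1 + f v = 2 * τ * (1 - v) / D v := by
    intro v hv
    have hd := (hD v hv).ne'
    simp only [hfdef]
    field_simp
    simp only [hDdef]; ring
  have hmem : ∀ v ∈ Ioo (0:ℝ) 1, f v ∈ Ioo (-1:ℝ) 1 := by
    intro v hv
    have hd := hD v hv
    have hm := h1m v hv
    have hp := h1p v hv
    constructor
    · nlinarith [hv.1, hv.2, div_pos (by nlinarith [hv.1, hv.2] : (0:ℝ) < 2 * τ * (1 - v)) hd]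
    · nlinarith [div_pos (by nlinarith [hv.1] : (0:ℝ) < 2 * lam * v) hd]
  have hg : ∀ v ∈ Ioo (0:ℝ) 1,
      τ * (1 - f v) / (τ * (1 - f v) + lam * (1 + f v)) = v := by
    intro v hv
    have hd := (hD v hv).ne'
    rw [h1m v hv, h1p v hv]
    rw [div_eq_iff]
    · field_simp
      ring
    · field_simp
      exact (div_pos (by nlinarith [mul_pos hτ hlam]) (hD v hv)).ne'
  have hinj : InjOn f (Ioo (0:ℝ) 1) := by
    intro a ha b hb hab
    have h1 := hg a ha
    have h2 := hg b hb
    rw [hab] at h1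
    exact h1.symm.trans h2
  have himg : f '' Ioo (0:ℝ) 1 = Ioo (-1:ℝ) 1 := by
    apply Subset.antisymm
    · rintro _ ⟨v, hv, rfl⟩; exact hmem v hv
    · intro ξ hξ
      have hE : 0 < τ * (1 - ξ) + lam * (1 + ξ) := by nlinarith [hξ.1, hξ.2]
      set v : ℝ := τ * (1 - ξ) / (τ * (1 - ξ) + lam * (1 + ξ)) with hvdef
      have hv : v ∈ Ioo (0:ℝ) 1 := by
        constructor
        · exact div_pos (by nlinarith [hξ.2]) hE
        · rw [hvdef, div_lt_one hE]; nlinarith [hξ.1]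
      refine ⟨v, hv, ?_⟩
      have hd := (hD v hv).ne'
      simp only [hfdef]
      rw [div_eq_iff hd]
      simp only [hDdef, hvdef]
      field_simp
      ring
  have hderiv : ∀ v ∈ Ioo (0:ℝ) 1,
      HasDerivWithinAt f (-(2 * τ * lam) / (D v) ^ 2) (Ioo (0:ℝ) 1) v := by
    intro v hv
    have hd := hD v hv
    have hN : HasDerivAt (fun v : ℝ => τ * (1 - v) - lam * v) (-τ - lam) v := by
      have h1 : HasDerivAt (fun v : ℝ => τ * (1 - v)) (-τ) v := by
        simpa using ((hasDerivAt_id v).const_sub 1).const_mul τ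
      have h2 : HasDerivAt (fun v : ℝ => lam * v) lam v := by
        simpa using (hasDerivAt_id v).const_mul lam
      exact h1.sub h2
    have hDd : HasDerivAt D (-τ + lam) v := by
      have h1 : HasDerivAt (fun v : ℝ => τ * (1 - v)) (-τ) v := by
        simpa using ((hasDerivAt_id v).const_sub 1).const_mul τ
      have h2 : HasDerivAt (fun v : ℝ => lam * v) lam v := by
        simpa using (hasDerivAt_id v).const_mul lam
      exact h1.add h2
    have := hN.div hDd hd.ne'
    have heq : ((-τ - lam) * D v - (τ * (1 - v) - lam * v) * (-τ + lam)) / D v ^ 2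
        = -(2 * τ * lam) / (D v) ^ 2 := by
      rw [div_eq_div_iff (by positivity) (by positivity)]
      simp only [hDdef]; ring
    rw [heq] at this
    exact this.hasDerivWithinAt
  -- the key pointwise identity
  have key : ∀ v ∈ Ioo (0:ℝ) 1,
      |(-(2 * τ * lam) / (D v) ^ 2)| • G (f v)
        = (τ ^ (α - 1) * lam ^ (-α) / 2) * (v ^ (-α) * (1 - v) ^ (α - 1)) := by
    intro v hv
    have hd := hD v hv
    have hv0 := hv.1
    have hv1 : (0:ℝ) < 1 - v := by linarith [hv.2]
    have habs : |(-(2 * τ * lam) / (D v) ^ 2)| = 2 * τ * lam / (D v) ^ 2 := by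
      rw [abs_div, abs_of_pos (by positivity : (0:ℝ) < (D v) ^ 2),
        abs_of_nonpos (by nlinarith : -(2 * τ * lam) ≤ 0)]
      ring
    have hinv : (τ * (1 - f v) / (1 + f v) + lam)⁻¹ = (1 - v) / lam := by
      rw [h1m v hv, h1p v hv]
      rw [show τ * (2 * lam * v / D v) / (2 * τ * (1 - v) / D v) + lam = lam / (1 - v) by
        field_simp; ring]
      rw [inv_div]
    have e1 : (2 * lam * v / D v) ^ (-α)
        = (2:ℝ) ^ (-α) * lam ^ (-α) * v ^ (-α) * (D v) ^ α := by
      rw [Real.div_rpow (by positivity) hd.le,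
        Real.mul_rpow (by positivity) hv0.le,
        Real.mul_rpow (by positivity) hlam.le,
        Real.rpow_neg hd.le, div_eq_mul_inv, inv_inv]
    have e2 : (2 * τ * (1 - v) / D v) ^ (α - 2)
        = (2:ℝ) ^ (α - 2) * τ ^ (α - 2) * (1 - v) ^ (α - 2) * (D v) ^ (2 - α) := by
      rw [Real.div_rpow (by positivity) hd.le,
        Real.mul_rpow (by positivity) hv1.le,
        Real.mul_rpow (by positivity) hτ.le,
        show (2 - α) = -(α - 2) by ring, Real.rpow_neg hd.le, div_eq_mul_inv]
    have c2 : (2:ℝ) ^ (-α) = (1/4) / (2:ℝ) ^ (α - 2) := by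
      rw [eq_div_iff (by positivity : ((2:ℝ) ^ (α - 2)) ≠ 0), ← Real.rpow_add two_pos,
        show -α + (α - 2) = ((-2:ℤ):ℝ) by push_cast; ring, Real.rpow_intCast]
      norm_num
    have cτ : τ ^ (α - 1) = τ ^ (α - 2) * τ := by
      rw [← Real.rpow_add_one hτ.ne']
      congr 1; ring
    have cv : (1 - v) ^ (α - 1) = (1 - v) ^ (α - 2) * (1 - v) := by
      rw [← Real.rpow_add_one hv1.ne']
      congr 1; ring
    have cd : (D v) ^ 2 = (D v) ^ α * (D v) ^ (2 - α) := by
      rw [← Real.rpow_add hd, show α + (2 - α) = (2:ℝ) by ring, Real.rpow_two]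
    rw [smul_eq_mul, hG]
    simp only
    rw [hinv, h1m v hv, h1p v hv, e1, e2, habs, c2, cτ, cv, cd]
    have hb2 : ((2:ℝ) ^ (α - 2)) ≠ 0 := by positivity
    have hPa : ((D v) ^ α) ≠ 0 := by positivity
    have hPb : ((D v) ^ (2 - α)) ≠ 0 := by positivity
    field_simp
    ring
  -- change of variables
  have hcv := integral_image_eq_integral_abs_deriv_smul measurableSet_Ioo hderiv hinj G
  have hiff := integrableOn_image_iff_integrableOn_abs_deriv_smul measurableSet_Ioo hderiv hinj G
  rw [himg] at hcv hiff
  have hbeta := beta_integral_aux hα0 hα1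
  have hIright : IntegrableOn
      (fun v => |(-(2 * τ * lam) / (D v) ^ 2)| • G (f v)) (Ioo (0:ℝ) 1) := by
    apply IntegrableOn.congr_fun (hbeta.1.const_mul (τ ^ (α - 1) * lam ^ (-α) / 2))
      (fun v hv => (key v hv).symm) measurableSet_Ioo
  have hint : IntegrableOn G (Ioo (-1:ℝ) 1) := hiff.mpr hIright
  have hval : ∫ ξ in Ioo (-1:ℝ) 1, G ξ
      = (τ ^ (α - 1) * lam ^ (-α) / 2) * (π / Real.sin (π * α)) := by
    rw [hcv]
    rw [setIntegral_congr_fun measurableSet_Ioo key]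
    rw [MeasureTheory.integral_const_mul, hbeta.2]
  refine ⟨hint, ?_⟩
  rw [show (∫ ξ in Ioo (-1:ℝ) 1,
      (1 - ξ) ^ (-α) * (1 + ξ) ^ (α - 2) * (τ * (1 - ξ) / (1 + ξ) + lam)⁻¹)
      = ∫ ξ in Ioo (-1:ℝ) 1, G ξ from rfl, hval]
  have hsin : 0 < Real.sin (π * α) := by
    apply Real.sin_pos_of_pos_of_lt_pi
    · positivity
    · nlinarith [Real.pi_pos]
  have hττ : τ ^ (1 - α) * τ ^ (α - 1) = 1 := by
    rw [← Real.rpow_add hτ]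
    norm_num
  have hπ := Real.pi_pos
  rw [show (2 * Real.sin (Real.pi * α) / Real.pi) * τ ^ (1 - α) *
      (τ ^ (α - 1) * lam ^ (-α) / 2 * (π / Real.sin (π * α)))
      = (τ ^ (1 - α) * τ ^ (α - 1)) * lam ^ (-α) * (Real.sin (π * α) / Real.sin (π * α)) * (π / π)
      by ring, hττ, div_self hsin.ne', div_self hπ.ne']
  ring
end

section
/- Let α ∈ (0,1), k ≥ 1, and q₁, q₂ ≥ 0 with q = q₁ + q₂. Then the best uniform rational approximation errors satisfy both (1+q₁)² · E_{q₁,α,k} ≤ (1+q)² · E_{q,α,k} and E_{q,α,k} · (1 + q₂ · E_{q₁,α,k}) ≤ E_{q₁,α,k}; equivalently, (1+q₁)²/(1+q)² ≤ E_{q,α,k}/E_{q₁,α,k} ≤ 1/(1 + q₂ E_{q₁,α,k}) whenever E_{q₁,α,k} > 0. -/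
/-!
With `φ_p(x) = x / (1 + p x)` one has `g_{q₁+q₂} = φ_{q₂} ∘ g_{q₁}` and
`g_{q₁} = φ_{-q₂} ∘ g_{q₁+q₂}`, and `R_k` is stable under `φ_p` and under adding constants.
If `r ∈ R_k` approximates `f` within `e`, then `r ± e` lies on one side of `f`, so
`φ_p(r ± e) - φ_p(f)` has constant sign and width controlled by the slope of `φ_p`:
at most `2e / (1 + 2 q₂ e)` for `p = q₂ ≥ 0` on `[0, ∞)`, and at most `2e / m²` for `p = -q₂`
where `1 - q₂ g_{q₁+q₂} ≥ m = (1 + q₁) / (1 + q₁ + q₂)`. Recentring by half that width gives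
an element of `R_k` approximating `φ_p ∘ f` within half of it; taking infima over `r` gives
both bounds.
-/

open Real Set

/-- The best uniform rational approximation (BURA) error `E_{q,α,k}` of
`g_q(z;α) = z^α/(1 + q z^α)` on `[0,1]` by rational functions `P/Q` with
`deg P, deg Q ≤ k` and `Q` nonvanishing on `[0,1]`. -/
noncomputable def buraError (q α : ℝ) (k : ℕ) : ℝ :=
  sInf { e : ℝ | ∃ P Q : Polynomial ℝ, P.natDegree ≤ k ∧ Q.natDegree ≤ k ∧
    (∀ z ∈ Set.Icc (0:ℝ) 1, Q.eval z ≠ 0) ∧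
    e = ⨆ z : Set.Icc (0:ℝ) 1,
      |P.eval (z : ℝ) / Q.eval (z : ℝ) - (z : ℝ) ^ α / (1 + q * (z : ℝ) ^ α)| }

open Polynomial

/-- `r` agrees on `[0,1]` with an element of `R_k`. -/
def IsRatFunOn (k : ℕ) (r : ℝ → ℝ) : Prop :=
  ∃ P Q : ℝ[X], P.natDegree ≤ k ∧ Q.natDegree ≤ k ∧ (∀ z ∈ Icc (0:ℝ) 1, Q.eval z ≠ 0) ∧
    ∀ z ∈ Icc (0:ℝ) 1, r z = P.eval z / Q.eval z

namespace IsRatFunOn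

variable {k : ℕ} {r : ℝ → ℝ}

theorem add_const (hr : IsRatFunOn k r) (c : ℝ) : IsRatFunOn k fun z => r z + c := by
  obtain ⟨P, Q, hP, hQ, hQ0, hrPQ⟩ := hr
  refine ⟨P + C c * Q, Q, (natDegree_add_le _ _).trans
    (max_le hP ((natDegree_C_mul_le _ _).trans hQ)), hQ, hQ0, fun z hz => ?_⟩
  simp only [hrPQ z hz, eval_add, eval_mul, eval_C]
  field_simp [hQ0 z hz]

theorem div_one_add_mul (hr : IsRatFunOn k r) (p : ℝ)
    (hr0 : ∀ z ∈ Icc (0:ℝ) 1, 1 + p * r z ≠ 0) :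
    IsRatFunOn k fun z => r z / (1 + p * r z) := by
  obtain ⟨P, Q, hP, hQ, hQ0, hrPQ⟩ := hr
  have hQ'z : ∀ z ∈ Icc (0:ℝ) 1, (Q + C p * P).eval z = Q.eval z * (1 + p * r z) := by
    intro z hz
    simp only [hrPQ z hz, eval_add, eval_mul, eval_C]
    field_simp [hQ0 z hz]
  refine ⟨P, Q + C p * P, hP, (natDegree_add_le _ _).trans
    (max_le hQ ((natDegree_C_mul_le _ _).trans hP)), fun z hz => ?_, fun z hz => ?_⟩
  · rw [hQ'z z hz]
    exact mul_ne_zero (hQ0 z hz) (hr0 z hz)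
  · rw [hQ'z z hz, ← div_div, ← hrPQ z hz]

end IsRatFunOn

noncomputable def bestRatError (f : ℝ → ℝ) (k : ℕ) : ℝ :=
  sInf { e : ℝ | ∃ P Q : ℝ[X], P.natDegree ≤ k ∧ Q.natDegree ≤ k ∧
    (∀ z ∈ Icc (0:ℝ) 1, Q.eval z ≠ 0) ∧
    e = ⨆ z : Icc (0:ℝ) 1, |P.eval (z : ℝ) / Q.eval (z : ℝ) - f z| }

theorem buraError_eq_bestRatError (q α : ℝ) (k : ℕ) :
    buraError q α k = bestRatError (fun z => z ^ α / (1 + q * z ^ α)) k :=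
  rfl

section bestRatError

variable {f : ℝ → ℝ} {k : ℕ}

theorem bestRatError_le {r : ℝ → ℝ} {δ : ℝ} (hr : IsRatFunOn k r)
    (hδ : ∀ z ∈ Icc (0:ℝ) 1, |r z - f z| ≤ δ) : bestRatError f k ≤ δ := by
  obtain ⟨P, Q, hP, hQ, hQ0, hrPQ⟩ := hr
  have : Nonempty (Icc (0:ℝ) 1) := (nonempty_Icc.2 zero_le_one).to_subtype
  rw [bestRatError]
  refine csInf_le_of_le (bddBelow_def.2 ⟨0, ?_⟩) ⟨P, Q, hP, hQ, hQ0, rfl⟩ (ciSup_le fun z => ?_)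
  · rintro e ⟨-, -, -, -, -, rfl⟩
    exact Real.iSup_nonneg fun z => abs_nonneg _
  · rw [← hrPQ z z.2]
    exact hδ z z.2

theorem le_bestRatError (hf : ContinuousOn f (Icc 0 1)) {c : ℝ}
    (h : ∀ r e, IsRatFunOn k r → (∀ z ∈ Icc (0:ℝ) 1, |r z - f z| ≤ e) → c ≤ e) :
    c ≤ bestRatError f k := by
  refine le_csInf ⟨_, 0, 1, by simp, by simp, by simp, rfl⟩ ?_
  rintro e ⟨P, Q, hP, hQ, hQ0, rfl⟩
  refine h _ _ ⟨P, Q, hP, hQ, hQ0, fun _ _ => rfl⟩ fun z hz => ?_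
  have hcont : ContinuousOn (fun z => |P.eval z / Q.eval z - f z|) (Icc 0 1) :=
    ((P.continuousOn.div Q.continuousOn hQ0).sub hf).abs
  have hbdd := isCompact_Icc.bddAbove_image hcont
  rw [image_eq_range] at hbdd
  exact le_ciSup hbdd ⟨z, hz⟩

theorem bestRatError_nonneg : 0 ≤ bestRatError f k :=
  Real.sInf_nonneg fun _ ⟨_, _, _, _, _, he⟩ => he ▸ Real.iSup_nonneg fun _ => abs_nonneg _

end bestRatError

theorem div_one_add_mul_sub_div_one_add_mul {p x y : ℝ} (hx : 1 + p * x ≠ 0)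
    (hy : 1 + p * y ≠ 0) :
    x / (1 + p * x) - y / (1 + p * y) = (x - y) / ((1 + p * x) * (1 + p * y)) := by
  rw [div_sub_div _ _ hx hy]
  ring

theorem div_one_add_mul_div_one_add_mul {p q t : ℝ} (h : 1 + q * t ≠ 0) :
    t / (1 + q * t) / (1 + p * (t / (1 + q * t))) = t / (1 + (q + p) * t) := by
  have : 1 + p * (t / (1 + q * t)) = (1 + (q + p) * t) / (1 + q * t) := by
    rw [eq_div_iff h, add_mul, mul_assoc, div_mul_cancel₀ _ h]
    ring
  rw [this, div_div_div_cancel_right₀ h]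

theorem div_one_add_mul_sub_mem_Icc_of_nonneg {p x y e : ℝ} (hp : 0 ≤ p) (hy : 0 ≤ y)
    (hyx : y ≤ x) (hxy : x - y ≤ 2 * e) :
    x / (1 + p * x) - y / (1 + p * y) ∈ Icc 0 (2 * (e / (1 + 2 * p * e))) := by
  have hpy : 1 ≤ 1 + p * y := le_add_of_nonneg_right (mul_nonneg hp hy)
  have hpx : 1 + p * y ≤ 1 + p * x := by nlinarith
  rw [div_one_add_mul_sub_div_one_add_mul (by linarith) (by linarith)]
  have hxy0 : 0 ≤ x - y := by linarith
  have hden : 0 < (1 + p * x) * (1 + p * y) := by nlinarith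
  refine ⟨div_nonneg hxy0 hden.le, ?_⟩
  calc (x - y) / ((1 + p * x) * (1 + p * y)) ≤ (x - y) / (1 + p * (x - y)) :=
        div_le_div_of_nonneg_left hxy0 (by nlinarith) (by nlinarith)
    _ ≤ 2 * e / (1 + 2 * p * e) := by
        rw [div_le_div_iff₀ (by positivity) (by nlinarith)]
        nlinarith
    _ = 2 * (e / (1 + 2 * p * e)) := mul_div_assoc _ _ _

theorem div_one_add_mul_sub_mem_Icc_of_nonpos {p x y e m : ℝ} (hp : p ≤ 0) (hm : 0 < m)
    (hmy : m ≤ 1 + p * y) (hxy : x ≤ y) (hyx : y - x ≤ 2 * e) :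
    y / (1 + p * y) - x / (1 + p * x) ∈ Icc 0 (2 * (e / m ^ 2)) := by
  have hmx : m ≤ 1 + p * x := by nlinarith
  rw [div_one_add_mul_sub_div_one_add_mul (by linarith) (by linarith)]
  refine ⟨div_nonneg (by linarith) (mul_pos (by linarith) (by linarith)).le, ?_⟩
  calc (y - x) / ((1 + p * y) * (1 + p * x)) ≤ 2 * e / m ^ 2 := by
        rw [sq]
        gcongr
        · linarith
        · linarith
    _ = 2 * (e / m ^ 2) := mul_div_assoc _ _ _

theorem abs_sub_sub_le_of_sub_mem_Icc {u v δ : ℝ} (h : u - v ∈ Icc 0 (2 * δ)) :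
    |u - δ - v| ≤ δ := by
  rw [abs_le]
  constructor <;> linarith [h.1, h.2]

section transfer

variable {f g r : ℝ → ℝ} {k : ℕ} {p e : ℝ}

theorem bestRatError_le_of_div_one_add_mul_of_nonneg (hp : 0 ≤ p)
    (hf : ∀ z ∈ Icc (0:ℝ) 1, 0 ≤ f z) (hg : ∀ z ∈ Icc (0:ℝ) 1, g z = f z / (1 + p * f z))
    (hr : IsRatFunOn k r) (he : ∀ z ∈ Icc (0:ℝ) 1, |r z - f z| ≤ e) :
    bestRatError g k ≤ e / (1 + 2 * p * e) := by
  have hfr : ∀ z ∈ Icc (0:ℝ) 1, f z ≤ r z + e ∧ r z + e - f z ≤ 2 * e := fun z hz => by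
    have := abs_le.1 (he z hz)
    constructor <;> linarith
  have hden : ∀ z ∈ Icc (0:ℝ) 1, 1 + p * (r z + e) ≠ 0 := fun z hz => by
    nlinarith [hf z hz, (hfr z hz).1]
  refine bestRatError_le (((hr.add_const e).div_one_add_mul p hden).add_const
    (-(e / (1 + 2 * p * e)))) fun z hz => ?_
  rw [hg z hz, ← sub_eq_add_neg]
  exact abs_sub_sub_le_of_sub_mem_Icc
    (div_one_add_mul_sub_mem_Icc_of_nonneg hp (hf z hz) (hfr z hz).1 (hfr z hz).2)

theorem bestRatError_le_of_div_one_add_mul_of_nonpos {m : ℝ} (hp : p ≤ 0) (hm : 0 < m)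
    (hmf : ∀ z ∈ Icc (0:ℝ) 1, m ≤ 1 + p * f z)
    (hg : ∀ z ∈ Icc (0:ℝ) 1, g z = f z / (1 + p * f z))
    (hr : IsRatFunOn k r) (he : ∀ z ∈ Icc (0:ℝ) 1, |r z - f z| ≤ e) :
    bestRatError g k ≤ e / m ^ 2 := by
  have hfr : ∀ z ∈ Icc (0:ℝ) 1, r z + -e ≤ f z ∧ f z - (r z + -e) ≤ 2 * e := fun z hz => by
    have := abs_le.1 (he z hz)
    constructor <;> linarith
  have hden : ∀ z ∈ Icc (0:ℝ) 1, 1 + p * (r z + -e) ≠ 0 := fun z hz => by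
    nlinarith [hmf z hz, (hfr z hz).1]
  refine bestRatError_le (((hr.add_const (-e)).div_one_add_mul p hden).add_const (e / m ^ 2))
    fun z hz => ?_
  have := abs_sub_sub_le_of_sub_mem_Icc
    (div_one_add_mul_sub_mem_Icc_of_nonpos hp hm (hmf z hz) (hfr z hz).1 (hfr z hz).2)
  rw [hg z hz, abs_sub_comm]
  convert this using 2
  ring

theorem bestRatError_mul_one_add_mul_le (hp : 0 ≤ p) (hfc : ContinuousOn f (Icc 0 1))
    (hf : ∀ z ∈ Icc (0:ℝ) 1, 0 ≤ f z) (hg : ∀ z ∈ Icc (0:ℝ) 1, g z = f z / (1 + p * f z)) :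
    bestRatError g k * (1 + p * bestRatError f k) ≤ bestRatError f k := by
  refine le_bestRatError hfc fun r e hr he => ?_
  have hfe : bestRatError f k ≤ e := bestRatError_le hr he
  have he0 : 0 ≤ e := (abs_nonneg _).trans (he 0 ⟨le_rfl, zero_le_one⟩)
  have hge := bestRatError_le_of_div_one_add_mul_of_nonneg hp hf hg hr he
  rw [le_div_iff₀ (by positivity)] at hge
  calc bestRatError g k * (1 + p * bestRatError f k)
      ≤ bestRatError g k * (1 + 2 * p * e) :=
        mul_le_mul_of_nonneg_left (by nlinarith [bestRatError_nonneg (f := f) (k := k)])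
          bestRatError_nonneg
    _ ≤ e := hge

theorem sq_mul_bestRatError_le {m : ℝ} (hp : p ≤ 0) (hm : 0 < m)
    (hfc : ContinuousOn f (Icc 0 1)) (hmf : ∀ z ∈ Icc (0:ℝ) 1, m ≤ 1 + p * f z)
    (hg : ∀ z ∈ Icc (0:ℝ) 1, g z = f z / (1 + p * f z)) :
    m ^ 2 * bestRatError g k ≤ bestRatError f k :=
  le_bestRatError hfc fun _ _ hr he => by
    have := bestRatError_le_of_div_one_add_mul_of_nonpos hp hm hmf hg hr he
    rwa [le_div_iff₀ (by positivity), mul_comm] at this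

end transfer

theorem continuousOn_rpow_div_one_add_mul {α q : ℝ} (hα : 0 ≤ α) (hq : 0 ≤ q) :
    ContinuousOn (fun z : ℝ => z ^ α / (1 + q * z ^ α)) (Ici 0) :=
  have hrpow := (Real.continuous_rpow_const hα).continuousOn (s := Ici 0)
  hrpow.div (continuousOn_const.add (continuousOn_const.mul hrpow)) fun _ hz =>
    (add_pos_of_pos_of_nonneg one_pos (mul_nonneg hq (rpow_nonneg hz α))).ne'

theorem div_le_one_add_neg_mul_div {q₁ q₂ t : ℝ} (hq₁ : 0 ≤ q₁) (hq₂ : 0 ≤ q₂) (ht₀ : 0 ≤ t)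
    (ht₁ : t ≤ 1) : (1 + q₁) / (1 + (q₁ + q₂)) ≤ 1 + -q₂ * (t / (1 + (q₁ + q₂) * t)) := by
  have hden : 0 < 1 + (q₁ + q₂) * t := by positivity
  have : 1 + -q₂ * (t / (1 + (q₁ + q₂) * t)) = (1 + q₁ * t) / (1 + (q₁ + q₂) * t) := by
    field_simp
    ring
  rw [this, div_le_div_iff₀ (by positivity) hden]
  nlinarith [mul_nonneg hq₂ (sub_nonneg.2 ht₁)]

theorem buraError_two_sided_bounds_general (α : ℝ) (hα : α ∈ Set.Ioo (0:ℝ) 1) (k : ℕ)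
    (q₁ q₂ : ℝ) (hq₁ : 0 ≤ q₁) (hq₂ : 0 ≤ q₂) :
    (1 + q₁) ^ 2 * buraError q₁ α k ≤ (1 + (q₁ + q₂)) ^ 2 * buraError (q₁ + q₂) α k ∧
    buraError (q₁ + q₂) α k * (1 + q₂ * buraError q₁ α k) ≤ buraError q₁ α k := by
  have hq : 0 ≤ q₁ + q₂ := add_nonneg hq₁ hq₂
  have hden : ∀ q, 0 ≤ q → ∀ z ∈ Icc (0:ℝ) 1, 0 < 1 + q * z ^ α := fun q hq z hz =>
    add_pos_of_pos_of_nonneg one_pos (mul_nonneg hq (rpow_nonneg hz.1 α))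
  have hcont : ∀ q, 0 ≤ q → ContinuousOn (fun z : ℝ => z ^ α / (1 + q * z ^ α)) (Icc 0 1) :=
    fun q hq => (continuousOn_rpow_div_one_add_mul hα.1.le hq).mono Icc_subset_Ici_self
  simp only [buraError_eq_bestRatError]
  constructor
  · have hm : 0 < (1 + q₁) / (1 + (q₁ + q₂)) := by positivity
    have := sq_mul_bestRatError_le (k := k) (neg_nonpos.2 hq₂) hm (hcont _ hq)
      (fun z hz => div_le_one_add_neg_mul_div hq₁ hq₂ (rpow_nonneg hz.1 α)
        (rpow_le_one hz.1 hz.2 hα.1.le))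
      fun z hz => by rw [div_one_add_mul_div_one_add_mul (hden _ hq z hz).ne', add_neg_cancel_right]
    calc (1 + q₁) ^ 2 * bestRatError (fun z => z ^ α / (1 + q₁ * z ^ α)) k
        = (1 + (q₁ + q₂)) ^ 2 * (((1 + q₁) / (1 + (q₁ + q₂))) ^ 2 *
            bestRatError (fun z => z ^ α / (1 + q₁ * z ^ α)) k) := by
          field_simp
      _ ≤ _ := by gcongr
  · exact bestRatError_mul_one_add_mul_le hq₂ (hcont q₁ hq₁)
      (fun z hz => div_nonneg (rpow_nonneg hz.1 α) (hden q₁ hq₁ z hz).le)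
      fun z hz => (div_one_add_mul_div_one_add_mul (hden q₁ hq₁ z hz).ne').symm

/-- Two-sided estimates relating `E_{q,α,k}` and `E_{q₁,α,k}` for `q = q₁ + q₂`:
`(1+q₁)² E_{q₁,α,k} ≤ (1+q)² E_{q,α,k}` and `E_{q,α,k}(1 + q₂ E_{q₁,α,k}) ≤ E_{q₁,α,k}`. -/
theorem buraError_two_sided_bounds (α : ℝ) (hα : α ∈ Set.Ioo (0:ℝ) 1) (k : ℕ) (hk : 1 ≤ k)
    (q₁ q₂ : ℝ) (hq₁ : 0 ≤ q₁) (hq₂ : 0 ≤ q₂) :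
    (1 + q₁) ^ 2 * buraError q₁ α k ≤ (1 + (q₁ + q₂)) ^ 2 * buraError (q₁ + q₂) α k ∧
    buraError (q₁ + q₂) α k * (1 + q₂ * buraError q₁ α k) ≤ buraError q₁ α k :=
  buraError_two_sided_bounds_general α hα k q₁ q₂ hq₁ hq₂
end

section
/- Let α ∈ (0,1), k ≥ 1, and q₁ ≥ 0, q₂ > 0 with q = q₁ + q₂. If E_{q₁,α,k} > 0, then E_{q,α,k} < E_{q₁,α,k}; that is, the best uniform rational approximation error E_{q,α,k} strictly decreases as q increases. -/
open Real Set

/-!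
Write `φ(x) = x / (1 + q₂ x)`. Then `g_{q₁+q₂} = φ ∘ g_{q₁}`, and for `r = P/Q ∈ R_k` and a shift `t`,
`φ(r + t) = (P + tQ) / (Q + q₂ (P + tQ))` is again in `R_k`. Because `g_{q₁} ≥ 0`, the map `φ`
shrinks an error `d > 0` above `g_{q₁}` to at most `d / (1 + q₂ d)`, while an error `d > 0` below it
grows to at most `d / (1 - q₂ d)`. Shifting a near-best approximant of `g_{q₁}` upward by a suitable
`t` before applying `φ` therefore gives an approximant of `g_{q₁+q₂}` with error strictly below
`E_{q₁,α,k}`.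
-/

open Polynomial

section Mobius

variable {β G x : ℝ}

lemma div_one_add_mul_sub_div (hx : 1 + β * x ≠ 0) (hG : 1 + β * G ≠ 0) :
    x / (1 + β * x) - G / (1 + β * G) = (x - G) / ((1 + β * x) * (1 + β * G)) := by
  rw [div_sub_div _ _ hx hG]; ring

lemma abs_div_one_add_mul_sub_le (hβ : 0 ≤ β) (hG : 0 ≤ G) {a b : ℝ} (hβa : β * a < 1)
    (hax : G - a ≤ x) (hxb : x ≤ G + b) :
    0 < 1 + β * x ∧ |x / (1 + β * x) - G / (1 + β * G)| ≤ max (b / (1 + β * b)) (a / (1 - β * a)) := by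
  have hx : 0 < 1 + β * x := by nlinarith
  have hG' : 0 < 1 + β * G := by nlinarith
  have hβG := mul_nonneg hβ hG
  refine ⟨hx, ?_⟩
  have hD := mul_pos hx hG'
  rw [div_one_add_mul_sub_div hx.ne' hG'.ne', abs_div, abs_of_pos hD, div_le_iff₀ hD]
  rcases le_total G x with hGx | hxG
  · have hb : 0 < 1 + β * b := by nlinarith
    refine le_trans ?_ (mul_le_mul_of_nonneg_right (le_max_left _ _) hD.le)
    rw [abs_of_nonneg (by linarith), div_mul_eq_mul_div, le_div_iff₀ hb]
    nlinarith [mul_nonneg hβG (sub_nonneg.2 hGx), mul_nonneg hβG (sub_nonneg.2 hxb),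
      mul_nonneg (mul_nonneg hβG hβG) (sub_nonneg.2 hxb),
      mul_nonneg (mul_nonneg hβG hβ) (mul_nonneg (sub_nonneg.2 hGx) (sub_nonneg.2 hxb))]
  · have ha : 0 < 1 - β * a := by linarith
    refine le_trans ?_ (mul_le_mul_of_nonneg_right (le_max_right _ _) hD.le)
    rw [abs_of_nonpos (by linarith), div_mul_eq_mul_div, le_div_iff₀ ha]
    nlinarith [mul_nonneg hβG (sub_nonneg.2 hxG), mul_nonneg hβG (sub_nonneg.2 hax),
      mul_nonneg (mul_nonneg hβG (sub_nonneg.2 hax)) (sub_nonneg.2 hxG),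
      mul_nonneg (mul_nonneg hβG (sub_nonneg.2 hax)) ha.le]

/-- With `u = β e`: `b = e (1 + u)` has `b / (1 + β b) = e (1 + u) / (1 + u + u²)`, and `a` is chosen
strictly between `2 e - b = e (1 - u)` and `e / (1 + u)`, the largest value with `a / (1 - β a) ≤ e`. -/
lemma exists_shift_bounds (hβ : 0 < β) {e : ℝ} (he : 0 < e) :
    ∃ a b : ℝ, β * a < 1 ∧ e < (a + b) / 2 ∧ b / (1 + β * b) < e ∧ a / (1 - β * a) < e := by
  have hu : 0 < β * e := by positivity
  have heu : 0 < e * (β * e) ^ 2 := by positivity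
  set a := e * (2 - (β * e) ^ 2) / (2 * (1 + β * e)) with ha
  have ha' : a * (1 + β * e) = e - e * (β * e) ^ 2 / 2 := by rw [ha]; field_simp
  refine ⟨a, e * (1 + β * e), ?_, ?_, ?_, ?_⟩
  · nlinarith
  · nlinarith
  · rw [div_lt_iff₀ (by positivity)]; nlinarith
  · rw [div_lt_iff₀ (by nlinarith)]; nlinarith

end Mobius

lemma div_one_add_add_mul (q β : ℝ) {x : ℝ} (h : 1 + q * x ≠ 0) :
    x / (1 + (q + β) * x) = x / (1 + q * x) / (1 + β * (x / (1 + q * x))) := by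
  have hden : 1 + β * (x / (1 + q * x)) = (1 + (q + β) * x) / (1 + q * x) := by
    rw [eq_div_iff h, add_mul, one_mul, mul_assoc, div_mul_cancel₀ x h]
    ring
  rw [hden, div_div_div_cancel_right₀ h]

lemma natDegree_add_C_mul_le {P Q : ℝ[X]} {k : ℕ} (hP : P.natDegree ≤ k) (hQ : Q.natDegree ≤ k)
    (c : ℝ) : (P + C c * Q).natDegree ≤ k :=
  natDegree_add_le_of_degree_le hP ((natDegree_C_mul_le c Q).trans hQ)

lemma eval_add_C_mul (P Q : ℝ[X]) (c : ℝ) {y : ℝ} (hQ : Q.eval y ≠ 0) :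
    (P + C c * Q).eval y = Q.eval y * (P.eval y / Q.eval y + c) := by
  simp only [eval_add, eval_mul, eval_C]
  field_simp

lemma eval_add_C_mul_add_C_mul (P Q : ℝ[X]) (β t : ℝ) {y : ℝ} (hQ : Q.eval y ≠ 0) :
    (Q + C β * (P + C t * Q)).eval y = Q.eval y * (1 + β * (P.eval y / Q.eval y + t)) := by
  rw [eval_add, eval_mul, eval_C, eval_add_C_mul P Q t hQ]
  ring

section Bura

variable {q α : ℝ} {k : ℕ}

lemma buraError_le {P Q : ℝ[X]} (hP : P.natDegree ≤ k) (hQ : Q.natDegree ≤ k)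
    (hQne : ∀ z ∈ Icc (0:ℝ) 1, Q.eval z ≠ 0) {M : ℝ}
    (hM : ∀ z ∈ Icc (0:ℝ) 1, |P.eval z / Q.eval z - z ^ α / (1 + q * z ^ α)| ≤ M) :
    buraError q α k ≤ M := by
  have : Nonempty (Icc (0:ℝ) 1) := ⟨⟨0, left_mem_Icc.2 zero_le_one⟩⟩
  refine le_trans (csInf_le ⟨0, ?_⟩ ⟨P, Q, hP, hQ, hQne, rfl⟩) (ciSup_le fun z => hM z z.2)
  rintro _ ⟨P, Q, -, -, -, rfl⟩
  exact Real.iSup_nonneg fun z => abs_nonneg _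

lemma exists_approx_lt_of_buraError_lt (hα : 0 ≤ α) (hq : 0 ≤ q) {m : ℝ}
    (h : buraError q α k < m) :
    ∃ P Q : ℝ[X], P.natDegree ≤ k ∧ Q.natDegree ≤ k ∧ (∀ z ∈ Icc (0:ℝ) 1, Q.eval z ≠ 0) ∧
      ∀ z ∈ Icc (0:ℝ) 1, |P.eval z / Q.eval z - z ^ α / (1 + q * z ^ α)| < m := by
  obtain ⟨_, ⟨P, Q, hP, hQ, hQne, rfl⟩, hlt⟩ :=
    exists_lt_of_csInf_lt (by exact ⟨_, 0, 1, by simp, by simp, by simp, rfl⟩) h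
  refine ⟨P, Q, hP, hQ, hQne, fun z hz => (le_ciSup ?_ (⟨z, hz⟩ : Icc (0:ℝ) 1)).trans_lt hlt⟩
  -- an unbounded `⨆` would be `0`, so the bound on each value needs continuity on `[0, 1]`
  have hpow : Continuous fun y : ℝ => y ^ α := Real.continuous_rpow_const hα
  have hcont : ContinuousOn (fun y => |P.eval y / Q.eval y - y ^ α / (1 + q * y ^ α)|) (Icc 0 1) :=
    ((P.continuousOn.div Q.continuousOn hQne).sub (hpow.continuousOn.div (by fun_prop)
      fun y hy => by nlinarith [mul_nonneg hq (rpow_nonneg hy.1 α)])).abs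
  exact (isCompact_range hcont.domRestrict).bddAbove

end Bura

theorem buraError_strict_decrease_general (α : ℝ) (hα : α ∈ Set.Ioo (0:ℝ) 1) (k : ℕ)
    (q₁ q₂ : ℝ) (hq₁ : 0 ≤ q₁) (hq₂ : 0 < q₂) (hE : 0 < buraError q₁ α k) :
    buraError (q₁ + q₂) α k < buraError q₁ α k := by
  obtain ⟨a, b, hβa, hab, hb, ha⟩ := exists_shift_bounds hq₂ hE
  obtain ⟨P, Q, hP, hQ, hQne, happrox⟩ := exists_approx_lt_of_buraError_lt hα.1.le hq₁ hab
  set t := (b - a) / 2 with ht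
  have hP' := natDegree_add_C_mul_le hP hQ t
  have hpointwise : ∀ z ∈ Icc (0:ℝ) 1, (Q + C q₂ * (P + C t * Q)).eval z ≠ 0 ∧
      |(P + C t * Q).eval z / (Q + C q₂ * (P + C t * Q)).eval z -
        z ^ α / (1 + (q₁ + q₂) * z ^ α)| ≤ max (b / (1 + q₂ * b)) (a / (1 - q₂ * a)) := by
    intro z hz
    have hz₁ : 0 < 1 + q₁ * z ^ α := by nlinarith [mul_nonneg hq₁ (rpow_nonneg hz.1 α)]
    have hG : 0 ≤ z ^ α / (1 + q₁ * z ^ α) := div_nonneg (rpow_nonneg hz.1 α) hz₁.le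
    have hr := abs_lt.1 (happrox z hz)
    obtain ⟨hpos, hle⟩ := abs_div_one_add_mul_sub_le hq₂.le hG hβa
      (x := P.eval z / Q.eval z + t) (b := b) (by linarith) (by linarith)
    have hQ' := eval_add_C_mul_add_C_mul P Q q₂ t (hQne z hz)
    refine ⟨by rw [hQ']; exact mul_ne_zero (hQne z hz) hpos.ne', ?_⟩
    rwa [hQ', eval_add_C_mul P Q t (hQne z hz), mul_div_mul_left _ _ (hQne z hz),
      div_one_add_add_mul q₁ q₂ hz₁.ne']
  exact (buraError_le hP' (natDegree_add_C_mul_le hQ hP' q₂) (fun z hz => (hpointwise z hz).1)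
    (fun z hz => (hpointwise z hz).2)).trans_lt (max_lt hb ha)

/-- Strict monotone decrease of the BURA error in `q`: if `q₂ > 0`, `q = q₁ + q₂` and
`E_{q₁,α,k} > 0`, then `E_{q,α,k} < E_{q₁,α,k}`. -/
theorem buraError_strict_decrease (α : ℝ) (hα : α ∈ Set.Ioo (0:ℝ) 1) (k : ℕ) (hk : 1 ≤ k)
    (q₁ q₂ : ℝ) (hq₁ : 0 ≤ q₁) (hq₂ : 0 < q₂) (hE : 0 < buraError q₁ α k) :
    buraError (q₁ + q₂) α k < buraError q₁ α k :=
  buraError_strict_decrease_general α hα k q₁ q₂ hq₁ hq₂ hE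
end

section
/- Let 𝔄 be a complete normed (Banach) algebra over ℝ and let a, b ∈ 𝔄. Then there exists a constant C ≥ 0, depending only on a and b, such that for every integer n ≥ 1, ‖(exp(a/n) · exp(b/n))^n − exp(a+b)‖ ≤ C/n (first-order convergence of the Lie–Trotter sequential splitting). -/
/-! With `τ = 1 / n`, `S = exp (τ • a) * exp (τ • b)` and `T = exp (τ • (a + b))` we have
`T ^ n = exp (a + b)`. Expanding the exponentials to second order gives the local error
`‖S - T‖ = O(τ²)`, while `‖S - 1‖, ‖T - 1‖ = O(τ)` keep all powers `S ^ k`, `T ^ k` with `k ≤ n`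
bounded (stability). The telescoping identity `S ^ n - T ^ n = ∑ S ^ i (S - T) T ^ (n - 1 - i)`
then adds up `n` local errors to a global error `O(τ)`. -/

open NormedSpace Finset
open scoped Nat

section Ring

variable {R : Type*} [Ring R]

theorem pow_sub_pow_eq_sum_pow_mul_sub_mul_pow (x y : R) (n : ℕ) :
    x ^ n - y ^ n = ∑ i ∈ range n, x ^ i * (x - y) * y ^ (n - 1 - i) := by
  have telescope : ∀ i ∈ range n, x ^ i * (x - y) * y ^ (n - 1 - i) =
      x ^ (i + 1) * y ^ (n - (i + 1)) - x ^ i * y ^ (n - i) := by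
    intro i hi
    rw [show n - i = n - (i + 1) + 1 by grind, show n - 1 - i = n - (i + 1) by omega,
      pow_succ, pow_succ']
    noncomm_ring
  rw [sum_congr rfl telescope, sum_range_sub (fun i ↦ x ^ i * y ^ (n - i))]
  simp

end Ring

section NormedRing

variable {R : Type*} [NormedRing R]

theorem norm_pow_sub_pow_le (x y : R) (n : ℕ) {P Q : ℝ}
    (hP : ∀ k < n, ‖x ^ k‖ ≤ P) (hQ : ∀ k < n, ‖y ^ k‖ ≤ Q) :
    ‖x ^ n - y ^ n‖ ≤ n * (P * ‖x - y‖ * Q) := by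
  rw [pow_sub_pow_eq_sum_pow_mul_sub_mul_pow]
  refine (norm_sum_le_of_le _ fun i hi ↦ ?_).trans_eq (by rw [sum_const, card_range, nsmul_eq_mul])
  have hi : i < n := mem_range.mp hi
  calc ‖x ^ i * (x - y) * y ^ (n - 1 - i)‖ ≤ ‖x ^ i‖ * ‖x - y‖ * ‖y ^ (n - 1 - i)‖ := norm_mul₃_le
    _ ≤ P * ‖x - y‖ * Q := by
      have hPi := hP i hi
      have hP0 : 0 ≤ P := (norm_nonneg _).trans hPi
      exact mul_le_mul (by gcongr) (hQ _ (by omega)) (norm_nonneg _) (by positivity)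

/- Powers are controlled through `‖x - 1‖` rather than `‖x‖`: the norm is not assumed to satisfy
`‖1‖ = 1`, so `x` close to `1` need not have `‖x‖ ≤ 1 + O(‖x - 1‖)`. -/
theorem norm_pow_le_mul_exp (x : R) (k : ℕ) :
    ‖x ^ k‖ ≤ ‖(1 : R)‖ * Real.exp (k * ‖x - 1‖) := by
  induction k with
  | zero => simp
  | succ k ih =>
    calc ‖x ^ (k + 1)‖ = ‖x ^ k + x ^ k * (x - 1)‖ := by noncomm_ring
      _ ≤ ‖x ^ k‖ * (1 + ‖x - 1‖) := by
        grw [norm_add_le, norm_mul_le]; ring_nf; rfl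
      _ ≤ ‖(1 : R)‖ * Real.exp (k * ‖x - 1‖) * Real.exp ‖x - 1‖ := by
        gcongr; linarith [Real.add_one_le_exp ‖x - 1‖]
      _ = ‖(1 : R)‖ * Real.exp ((k + 1 : ℕ) * ‖x - 1‖) := by
        rw [mul_assoc, ← Real.exp_add]; push_cast; ring_nf

theorem norm_pow_le_of_norm_sub_one_le {x : R} {t c : ℝ}
    (hx : ‖x - 1‖ ≤ t * c) (hc : 0 ≤ c) {k : ℕ} (hkt : k * t ≤ 1) :
    ‖x ^ k‖ ≤ ‖(1 : R)‖ * Real.exp c := by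
  refine (norm_pow_le_mul_exp x k).trans ?_
  gcongr
  calc k * ‖x - 1‖ ≤ k * (t * c) := by gcongr
    _ = (k * t) * c := by ring
    _ ≤ c := mul_le_of_le_one_left hc hkt

theorem norm_pow_sub_pow_le_of_norm_sub_le {x y : R} {n : ℕ}
    {t c c' K : ℝ} (ht : 0 ≤ t) (hnt : n * t ≤ 1) (hc : 0 ≤ c) (hc' : 0 ≤ c') (hK : 0 ≤ K)
    (hx : ‖x - 1‖ ≤ t * c) (hy : ‖y - 1‖ ≤ t * c') (hxy : ‖x - y‖ ≤ t ^ 2 * K) :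
    ‖x ^ n - y ^ n‖ ≤ t * (‖(1 : R)‖ * Real.exp c * K * (‖(1 : R)‖ * Real.exp c')) := by
  have hkt : ∀ k < n, k * t ≤ 1 := fun k hk ↦ le_trans (by gcongr) hnt
  calc ‖x ^ n - y ^ n‖
      ≤ n * (‖(1 : R)‖ * Real.exp c * ‖x - y‖ * (‖(1 : R)‖ * Real.exp c')) :=
        norm_pow_sub_pow_le x y n (fun k hk ↦ norm_pow_le_of_norm_sub_one_le hx hc (hkt k hk))
          (fun k hk ↦ norm_pow_le_of_norm_sub_one_le hy hc' (hkt k hk))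
    _ ≤ n * (‖(1 : R)‖ * Real.exp c * (t ^ 2 * K) * (‖(1 : R)‖ * Real.exp c')) := by gcongr
    _ = (n * t) * (t * (‖(1 : R)‖ * Real.exp c * K * (‖(1 : R)‖ * Real.exp c'))) := by ring
    _ ≤ t * (‖(1 : R)‖ * Real.exp c * K * (‖(1 : R)‖ * Real.exp c')) :=
        mul_le_of_le_one_left (by positivity) hnt

end NormedRing

section BanachAlgebra

variable {𝔸 : Type*} [NormedRing 𝔸] [NormedAlgebra ℝ 𝔸] [CompleteSpace 𝔸]

theorem norm_exp_sub_sum_range_le (x : 𝔸) {k : ℕ} (hk : k ≠ 0) :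
    ‖exp x - ∑ i ∈ range k, (i !⁻¹ : ℝ) • x ^ i‖ ≤ ‖x‖ ^ k * Real.exp ‖x‖ := by
  have tail : exp x - ∑ i ∈ range k, (i !⁻¹ : ℝ) • x ^ i =
      ∑' i, ((i + k)!⁻¹ : ℝ) • x ^ (i + k) := by
    rw [exp_eq_tsum ℝ, sub_eq_iff_eq_add', (expSeries_summable' x).sum_add_tsum_nat_add k]
  have majorant : HasSum (fun i ↦ ‖x‖ ^ k * (‖x‖ ^ i / i !)) (‖x‖ ^ k * Real.exp ‖x‖) := by
    rw [Real.exp_eq_exp_ℝ]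
    exact (expSeries_div_hasSum_exp ‖x‖).mul_left _
  rw [tail]
  refine tsum_of_norm_bounded majorant fun i ↦ ?_
  calc ‖((i + k)!⁻¹ : ℝ) • x ^ (i + k)‖ ≤ (i !⁻¹ : ℝ) * ‖x‖ ^ (i + k) := by
        rw [norm_smul, Real.norm_of_nonneg (by positivity)]
        gcongr
        · exact Nat.le_add_right i k
        · exact norm_pow_le' x (by omega)
    _ = ‖x‖ ^ k * (‖x‖ ^ i / i !) := by ring

theorem norm_exp_smul_sub_sum_range_le (x : 𝔸) {k : ℕ} (hk : k ≠ 0) {t : ℝ} (ht0 : 0 ≤ t)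
    (ht1 : t ≤ 1) :
    ‖exp (t • x) - ∑ i ∈ range k, (i !⁻¹ : ℝ) • (t • x) ^ i‖ ≤
      t ^ k * (‖x‖ ^ k * Real.exp ‖x‖) := by
  have hnorm : ‖t • x‖ = t * ‖x‖ := by rw [norm_smul, Real.norm_of_nonneg ht0]
  calc _ ≤ ‖t • x‖ ^ k * Real.exp ‖t • x‖ := norm_exp_sub_sum_range_le _ hk
    _ ≤ (t * ‖x‖) ^ k * Real.exp ‖x‖ := by
      rw [hnorm]
      gcongr
      exact mul_le_of_le_one_left (norm_nonneg x) ht1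
    _ = t ^ k * (‖x‖ ^ k * Real.exp ‖x‖) := by ring

theorem norm_exp_smul_sub_one_le (x : 𝔸) {t : ℝ} (ht0 : 0 ≤ t) (ht1 : t ≤ 1) :
    ‖exp (t • x) - 1‖ ≤ t * (‖x‖ * Real.exp ‖x‖) := by
  simpa using norm_exp_smul_sub_sum_range_le x one_ne_zero ht0 ht1

theorem norm_exp_smul_sub_one_sub_smul_le (x : 𝔸) {t : ℝ} (ht0 : 0 ≤ t) (ht1 : t ≤ 1) :
    ‖exp (t • x) - 1 - t • x‖ ≤ t ^ 2 * (‖x‖ ^ 2 * Real.exp ‖x‖) := by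
  simpa [sum_range_succ, sub_sub] using norm_exp_smul_sub_sum_range_le x two_ne_zero ht0 ht1

theorem exp_one_div_smul_pow (x : 𝔸) {n : ℕ} (hn : n ≠ 0) :
    exp ((1 / (n : ℝ)) • x) ^ n = exp x := by
  let : NormedAlgebra ℚ 𝔸 := NormedAlgebra.restrictScalars ℚ ℝ 𝔸
  rw [← exp_nsmul, ← Nat.cast_smul_eq_nsmul ℝ, smul_smul,
    mul_one_div_cancel (Nat.cast_ne_zero.2 hn), one_smul]

theorem norm_exp_smul_mul_exp_smul_sub_one_le (a b : 𝔸) {t : ℝ} (ht0 : 0 ≤ t) (ht1 : t ≤ 1) :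
    ‖exp (t • a) * exp (t • b) - 1‖ ≤
      t * (‖a‖ * Real.exp ‖a‖ * (‖b‖ * Real.exp ‖b‖) + ‖a‖ * Real.exp ‖a‖ +
        ‖b‖ * Real.exp ‖b‖) := by
  have hA := norm_exp_smul_sub_one_le a ht0 ht1
  have hB := norm_exp_smul_sub_one_le b ht0 ht1
  have split : ∀ X Y : 𝔸, X * Y - 1 = (X - 1) * (Y - 1) + (X - 1) + (Y - 1) := by
    intro X Y; noncomm_ring
  calc _ ≤ ‖exp (t • a) - 1‖ * ‖exp (t • b) - 1‖ + ‖exp (t • a) - 1‖ + ‖exp (t • b) - 1‖ := by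
        grw [split, norm_add₃_le, norm_mul_le]
    _ ≤ t * (‖a‖ * Real.exp ‖a‖) * (t * (‖b‖ * Real.exp ‖b‖)) + t * (‖a‖ * Real.exp ‖a‖) +
          t * (‖b‖ * Real.exp ‖b‖) := by gcongr
    _ ≤ _ := by
      have : t * t ≤ t := mul_le_of_le_one_left ht0 ht1
      have : 0 ≤ ‖a‖ * Real.exp ‖a‖ * (‖b‖ * Real.exp ‖b‖) := by positivity
      nlinarith

theorem norm_exp_smul_mul_exp_smul_sub_exp_smul_add_le (a b : 𝔸) {t : ℝ} (ht0 : 0 ≤ t)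
    (ht1 : t ≤ 1) :
    ‖exp (t • a) * exp (t • b) - exp (t • (a + b))‖ ≤
      t ^ 2 * (‖a‖ * Real.exp ‖a‖ * (‖b‖ * Real.exp ‖b‖) + ‖a‖ ^ 2 * Real.exp ‖a‖ +
        ‖b‖ ^ 2 * Real.exp ‖b‖ + ‖a + b‖ ^ 2 * Real.exp ‖a + b‖) := by
  have hA := norm_exp_smul_sub_one_le a ht0 ht1
  have hB := norm_exp_smul_sub_one_le b ht0 ht1
  have hA₂ := norm_exp_smul_sub_one_sub_smul_le a ht0 ht1
  have hB₂ := norm_exp_smul_sub_one_sub_smul_le b ht0 ht1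
  have hAB₂ := norm_exp_smul_sub_one_sub_smul_le (a + b) ht0 ht1
  rw [smul_add] at hAB₂ ⊢
  have split : ∀ X Y Z A B : 𝔸, X * Y - Z =
      (X - 1) * (Y - 1) + (X - 1 - A) + (Y - 1 - B) - (Z - 1 - (A + B)) := by
    intro X Y Z A B; noncomm_ring
  rw [split _ _ _ (t • a) (t • b)]
  grw [norm_sub_le, norm_add₃_le, norm_mul_le, hA, hB, hA₂, hB₂, hAB₂]
  exact le_of_eq (by ring)

end BanachAlgebra

/-- First-order convergence of the Lie–Trotter sequential splitting in a real Banach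
algebra: for `a, b ∈ 𝔄` there is `C ≥ 0` (depending only on `a` and `b`) such that
`‖(exp(a/n) exp(b/n))^n - exp(a+b)‖ ≤ C/n` for all `n ≥ 1`. -/
theorem lie_trotter_first_order (𝔄 : Type*) [NormedRing 𝔄] [NormedAlgebra ℝ 𝔄]
    [CompleteSpace 𝔄] (a b : 𝔄) :
    ∃ C : ℝ, 0 ≤ C ∧ ∀ n : ℕ, 1 ≤ n →
      ‖(NormedSpace.exp ((1 / (n : ℝ)) • a) * NormedSpace.exp ((1 / (n : ℝ)) • b)) ^ n -
          NormedSpace.exp (a + b)‖ ≤ C / n := by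
  set c := ‖a‖ * Real.exp ‖a‖ * (‖b‖ * Real.exp ‖b‖) + ‖a‖ * Real.exp ‖a‖ + ‖b‖ * Real.exp ‖b‖
  set c' := ‖a + b‖ * Real.exp ‖a + b‖
  set K := ‖a‖ * Real.exp ‖a‖ * (‖b‖ * Real.exp ‖b‖) + ‖a‖ ^ 2 * Real.exp ‖a‖ +
    ‖b‖ ^ 2 * Real.exp ‖b‖ + ‖a + b‖ ^ 2 * Real.exp ‖a + b‖
  refine ⟨‖(1 : 𝔄)‖ * Real.exp c * K * (‖(1 : 𝔄)‖ * Real.exp c'), by positivity, fun n hn ↦ ?_⟩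
  have hn0 : n ≠ 0 := Nat.one_le_iff_ne_zero.mp hn
  have ht0 : 0 ≤ 1 / (n : ℝ) := by positivity
  have ht1 : 1 / (n : ℝ) ≤ 1 := div_le_one_of_le₀ (by exact_mod_cast hn) (Nat.cast_nonneg n)
  have hnt : (n : ℝ) * (1 / n) ≤ 1 := (mul_one_div_cancel (Nat.cast_ne_zero.2 hn0)).le
  rw [← exp_one_div_smul_pow (a + b) hn0]
  refine (norm_pow_sub_pow_le_of_norm_sub_le ht0 hnt (by positivity) (by positivity)
    (by positivity) (norm_exp_smul_mul_exp_smul_sub_one_le a b ht0 ht1)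
    (norm_exp_smul_sub_one_le (a + b) ht0 ht1)
    (norm_exp_smul_mul_exp_smul_sub_exp_smul_add_le a b ht0 ht1)).trans_eq
    (one_div_mul_eq_div _ _)
end
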